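/- arXiv:1503.02722 — 2 statements merged into one kernel-verified Lean document; each statement's English description precedes it below -/
import Mathlib

section
/- Let x, y be unit vectors with r := ⟨x,y⟩ > 0 and v = x+y. Let U ⊆ U' be nested subspaces with projections P, P'. If ‖P'v‖² < (2r/(1+r))·‖v‖², then ⟨x,y⟩ − ⟨Px,Py⟩ > 0 for the projection P onto any subspace U of U'. -/
open RealInnerProductSpace

/-! Projecting onto a smaller subspace can only shrink `‖P(x + y)‖`, and by polarization
`4⟪Px, Py⟫ ≤ ‖Px + Py‖² = ‖P(x + y)‖²`. For unit vectors the hypothesis says exactly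
`‖P'(x + y)‖² < 4⟪x, y⟫`, because `‖x + y‖² = 2(1 + ⟪x, y⟫)`. -/

theorem Submodule.norm_starProjection_le_of_le {𝕜 E : Type*} [RCLike 𝕜]
    [NormedAddCommGroup E] [InnerProductSpace 𝕜 E] {U V : Submodule 𝕜 E}
    [U.HasOrthogonalProjection] [V.HasOrthogonalProjection] (h : U ≤ V) (v : E) :
    ‖U.starProjection v‖ ≤ ‖V.starProjection v‖ := by
  rw [← starProjection_comp_starProjection_of_le h]
  exact norm_starProjection_apply_le _ _

section Real

variable {E : Type*} [NormedAddCommGroup E] [InnerProductSpace ℝ E]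

theorem real_inner_le_norm_add_sq_div_four (a b : E) : ⟪a, b⟫ ≤ ‖a + b‖ ^ 2 / 4 := by
  linarith [norm_add_sq_real a b, norm_sub_sq_real a b, sq_nonneg ‖a - b‖]

theorem Submodule.real_inner_starProjection_lt_of_norm_sq_lt (U : Submodule ℝ E)
    [U.HasOrthogonalProjection] {x y : E} (h : ‖U.starProjection (x + y)‖ ^ 2 < 4 * ⟪x, y⟫) :
    ⟪U.starProjection x, U.starProjection y⟫ < ⟪x, y⟫ := by
  have := real_inner_le_norm_add_sq_div_four (U.starProjection x) (U.starProjection y)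
  rw [← map_add] at this
  linarith

theorem norm_add_sq_eq_of_norm_eq_one {x y : E} (hx : ‖x‖ = 1) (hy : ‖y‖ = 1) :
    ‖x + y‖ ^ 2 = 2 * (1 + ⟪x, y⟫) := by
  rw [norm_add_sq_real, hx, hy]
  ring

end Real

theorem stmt14_general (n : ℕ) (x y : EuclideanSpace ℝ (Fin n))
    (hx : ‖x‖ = 1) (hy : ‖y‖ = 1)
    (U U' : Submodule ℝ (EuclideanSpace ℝ (Fin n))) (hUU' : U ≤ U')
    (h : ‖(U'.orthogonalProjection (x + y) : EuclideanSpace ℝ (Fin n))‖ ^ 2 <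
        (2 * ⟪x, y⟫ / (1 + ⟪x, y⟫)) * ‖x + y‖ ^ 2) :
    0 < ⟪x, y⟫ - ⟪(U.orthogonalProjection x : EuclideanSpace ℝ (Fin n)),
      (U.orthogonalProjection y : EuclideanSpace ℝ (Fin n))⟫ := by
  rw [norm_add_sq_eq_of_norm_eq_one hx hy] at h
  -- if `⟪x, y⟫ = -1` the right side of `h` is `0`, whatever the junk value of the quotient
  have hr : 1 + ⟪x, y⟫ ≠ 0 := by
    intro h0
    rw [h0, mul_zero, mul_zero] at h
    exact (sq_nonneg _).not_gt h
  have hU' : ‖U'.starProjection (x + y)‖ ^ 2 < 4 * ⟪x, y⟫ := by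
    convert h using 1
    · rfl
    · field_simp
      ring
  refine sub_pos.2 (U.real_inner_starProjection_lt_of_norm_sq_lt ?_)
  exact (pow_le_pow_left₀ (norm_nonneg _) (U.norm_starProjection_le_of_le hUU' _) 2).trans_lt hU'

/-- For unit vectors `x, y` with `r := ⟪x,y⟫ > 0` and `v = x + y`, and
nested subspaces `U ⊆ U'` with projections `P, P'`: if `‖P'v‖² < (2r/(1+r))·‖v‖²`,
then `⟪x,y⟫ − ⟪Px, Py⟫ > 0`. -/
theorem stmt14 (n : ℕ) (x y : EuclideanSpace ℝ (Fin n))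
    (hx : ‖x‖ = 1) (hy : ‖y‖ = 1) (hr : 0 < ⟪x, y⟫)
    (U U' : Submodule ℝ (EuclideanSpace ℝ (Fin n))) (hUU' : U ≤ U')
    (h : ‖(U'.orthogonalProjection (x + y) : EuclideanSpace ℝ (Fin n))‖ ^ 2 <
        (2 * ⟪x, y⟫ / (1 + ⟪x, y⟫)) * ‖x + y‖ ^ 2) :
    0 < ⟪x, y⟫ - ⟪(U.orthogonalProjection x : EuclideanSpace ℝ (Fin n)),
      (U.orthogonalProjection y : EuclideanSpace ℝ (Fin n))⟫ :=
  stmt14_general n x y hx hy U U' hUU' h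
end

section
/- There exist vectors y, x, u₁, u₂ in R⁴ such that for all sufficiently small ε > 0: the correlations r(u₁,x), r(u₁,y), r(u₂,x), r(u₂,y) all tend to 0 as ε → 0, yet the least-squares coefficient of x when y is regressed onto {x, u₁, u₂} (with intercept) equals −1 while the simple regression coefficient of y on x is positive (approximately 0.5). -/
/-!
Since `y + x = (3, -3, 0, 0)` is a multiple of `u₁ + u₂` whenever `ε ≠ 0`, the data are fitted
exactly by `y = -x + c (u₁ + u₂)`, so every least-squares fit interpolates them; adding the
residual equations of the first two and of the last two observations forces the coefficient
of `x` to be `-1`. As `ε → 0` the `uᵢ` tend to `±(0, 0, 1, -1)`, which is uncorrelated with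
any vector whose last two entries agree, as those of `x` and `y` do; correlation is continuous
at non-constant vectors. The simple slope is read off the normal equations:
`b = (15 - 2√2) / (21 + 2√2) > 0`.
-/

open Filter

/-- Sample (Pearson) correlation of two data vectors of length 4. -/
noncomputable def sampleCorr (a b : Fin 4 → ℝ) : ℝ :=
  (∑ i, (a i - (∑ j, a j) / 4) * (b i - (∑ j, b j) / 4)) /
    (Real.sqrt (∑ i, (a i - (∑ j, a j) / 4) ^ 2) *
      Real.sqrt (∑ i, (b i - (∑ j, b j) / 4) ^ 2))

section LeastSquares

variable {ι : Type*} [Fintype ι]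

theorem eq_zero_of_sum_sq_le_sum_sq_of_eq_zero {r r' : ι → ℝ}
    (h : ∑ a, r a ^ 2 ≤ ∑ a, r' a ^ 2) (hr' : ∀ a, r' a = 0) (a : ι) : r a = 0 := by
  have hsum : ∑ a, r a ^ 2 = 0 := le_antisymm (by simpa [hr'] using h) (by positivity)
  exact pow_eq_zero_iff two_ne_zero |>.mp <|
    congrFun ((Fintype.sum_eq_zero_iff_of_nonneg fun a => sq_nonneg (r a)).mp hsum) a

theorem sum_mul_eq_zero_of_forall_sum_sq_le {r g : ι → ℝ}
    (h : ∀ t : ℝ, ∑ a, r a ^ 2 ≤ ∑ a, (r a - t * g a) ^ 2) : ∑ a, r a * g a = 0 := by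
  have hquad : ∀ t : ℝ, 0 ≤ (∑ a, g a ^ 2) * (t * t) + (-2 * ∑ a, r a * g a) * t + 0 := by
    intro t
    have hexp : ∑ a, (r a - t * g a) ^ 2
        = ∑ a, r a ^ 2 + ((∑ a, g a ^ 2) * (t * t) + (-2 * ∑ a, r a * g a) * t) := by
      simp only [Finset.mul_sum, Finset.sum_mul, ← Finset.sum_add_distrib]
      exact Finset.sum_congr rfl fun a _ => by ring
    linarith [h t]
  have := discrim_le_zero hquad
  rw [discrim] at this
  nlinarith [sq_nonneg (∑ a, r a * g a)]

variable {X Y : ι → ℝ} {b b0 : ℝ}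

theorem sum_residual_eq_zero_of_forall_le
    (h : ∀ b' b0' : ℝ, ∑ a, (Y a - (b * X a + b0)) ^ 2 ≤ ∑ a, (Y a - (b' * X a + b0')) ^ 2) :
    ∑ a, (Y a - (b * X a + b0)) = 0 := by
  have := sum_mul_eq_zero_of_forall_sum_sq_le (g := fun _ => 1) fun t =>
    (h b (b0 + t)).trans_eq (Finset.sum_congr rfl fun a _ => by ring)
  simpa using this

theorem sum_residual_mul_eq_zero_of_forall_le
    (h : ∀ b' b0' : ℝ, ∑ a, (Y a - (b * X a + b0)) ^ 2 ≤ ∑ a, (Y a - (b' * X a + b0')) ^ 2) :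
    ∑ a, (Y a - (b * X a + b0)) * X a = 0 :=
  sum_mul_eq_zero_of_forall_sum_sq_le fun t =>
    (h (b + t) b0).trans_eq (Finset.sum_congr rfl fun a _ => by ring)

end LeastSquares

section Correlation

theorem sum_sq_dev_pos {a : Fin 4 → ℝ} (i : Fin 4) (hi : a i ≠ (∑ j, a j) / 4) :
    0 < ∑ i, (a i - (∑ j, a j) / 4) ^ 2 :=
  Finset.sum_pos' (fun _ _ => sq_nonneg _)
    ⟨i, Finset.mem_univ i, pow_two_pos_of_ne_zero (sub_ne_zero.mpr hi)⟩

theorem continuousAt_sampleCorr_left {a b : Fin 4 → ℝ}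
    (ha : 0 < ∑ i, (a i - (∑ j, a j) / 4) ^ 2) (hb : 0 < ∑ i, (b i - (∑ j, b j) / 4) ^ 2) :
    ContinuousAt (fun a' => sampleCorr a' b) a := by
  unfold sampleCorr
  refine ContinuousAt.div (by fun_prop) (by fun_prop) ?_
  exact mul_ne_zero (Real.sqrt_ne_zero'.mpr ha) (Real.sqrt_ne_zero'.mpr hb)

end Correlation

noncomputable def reversalY : Fin 4 → ℝ := ![(√2 + 3) / 2, (√2 - 3) / 2, -1 / 2, -1 / 2]

noncomputable def reversalX : Fin 4 → ℝ := ![(-√2 + 3) / 2, (-√2 - 3) / 2, 1 / 2, 1 / 2]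

noncomputable def reversalU (ε : ℝ) : Fin 2 → Fin 4 → ℝ :=
  ![![ε / √2, -ε / √2, 1, -1], ![ε / √2, -ε / √2, -1, 1]]

theorem continuous_reversalU (i : Fin 2) : Continuous fun ε => reversalU ε i := by
  fin_cases i <;> simp only [reversalU] <;> fun_prop

theorem sampleCorr_reversalU_zero {b : Fin 4 → ℝ} (hb : b 2 = b 3) (i : Fin 2) :
    sampleCorr (reversalU 0 i) b = 0 := by
  fin_cases i <;> simp [sampleCorr, reversalU, Fin.sum_univ_four, hb]

theorem tendsto_sampleCorr_reversalU {b : Fin 4 → ℝ}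
    (hb : 0 < ∑ i, (b i - (∑ j, b j) / 4) ^ 2) (hb23 : b 2 = b 3) (i : Fin 2) :
    Tendsto (fun ε => sampleCorr (reversalU ε i) b) (nhdsWithin 0 (Set.Ioi 0)) (nhds 0) := by
  have hU : 0 < ∑ k, (reversalU 0 i k - (∑ j, reversalU 0 i j) / 4) ^ 2 :=
    sum_sq_dev_pos 2 (by fin_cases i <;> simp [reversalU, Fin.sum_univ_four])
  have hlim : Tendsto (fun ε => sampleCorr (reversalU ε i) b) (nhds 0)
      (nhds (sampleCorr (reversalU 0 i) b)) :=
    (continuousAt_sampleCorr_left hU hb).tendsto.comp (continuous_reversalU i).continuousAt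
  rw [sampleCorr_reversalU_zero hb23] at hlim
  exact hlim.mono_left nhdsWithin_le_nhds

theorem sum_sq_dev_reversalX_pos :
    0 < ∑ i, (reversalX i - (∑ j, reversalX j) / 4) ^ 2 :=
  sum_sq_dev_pos 2 (by
    simp only [reversalX, Fin.sum_univ_four, Matrix.cons_val]
    nlinarith [Real.sqrt_nonneg 2])

theorem sum_sq_dev_reversalY_pos :
    0 < ∑ i, (reversalY i - (∑ j, reversalY j) / 4) ^ 2 :=
  sum_sq_dev_pos 2 (by
    simp only [reversalY, Fin.sum_univ_four, Matrix.cons_val]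
    nlinarith [Real.sqrt_nonneg 2])

theorem reversal_simple_slope_pos {b b0 : ℝ}
    (h : ∀ b' b0' : ℝ, ∑ a, (reversalY a - (b * reversalX a + b0)) ^ 2 ≤
      ∑ a, (reversalY a - (b' * reversalX a + b0')) ^ 2) : 0 < b := by
  have hs := Real.sq_sqrt (zero_le_two : (0 : ℝ) ≤ 2)
  have h₁ := sum_residual_eq_zero_of_forall_le h
  have h₂ := sum_residual_mul_eq_zero_of_forall_le h
  simp only [reversalY, reversalX, Fin.sum_univ_four, Matrix.cons_val] at h₁ h₂
  have hb : b * (21 + 2 * √2) = 15 - 2 * √2 := by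
    linear_combination (1 - √2) * h₁ - 4 * h₂ - (1 + b) * hs
  have hs_lt : √2 < 2 := by nlinarith [Real.sqrt_nonneg 2]
  have hprod : 0 < b * (21 + 2 * √2) := by linarith
  exact pos_of_mul_pos_left hprod (by positivity)

theorem reversal_multiple_slope_eq_neg_one {ε b b0 c1 c2 : ℝ} (hε : ε ≠ 0)
    (h : ∀ b' b0' c1' c2' : ℝ,
      ∑ a, (reversalY a -
          (b * reversalX a + b0 + c1 * reversalU ε 0 a + c2 * reversalU ε 1 a)) ^ 2 ≤
        ∑ a, (reversalY a -
          (b' * reversalX a + b0' + c1' * reversalU ε 0 a + c2' * reversalU ε 1 a)) ^ 2) :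
    b = -1 := by
  have hs0 : √2 ≠ 0 := by positivity
  have hfit : ∀ a, reversalY a - (-1 * reversalX a + 0 + 3 / (2 * (ε / √2)) * reversalU ε 0 a +
      3 / (2 * (ε / √2)) * reversalU ε 1 a) = 0 := by
    intro a
    fin_cases a <;>
      simp only [reversalY, reversalX, reversalU, Fin.reduceFinMk, Matrix.cons_val] <;>
      field_simp <;> ring
  have hres := eq_zero_of_sum_sq_le_sum_sq_of_eq_zero (h (-1) 0 _ _) hfit
  have h₀ := hres 0
  have h₁ := hres 1
  have h₂ := hres 2
  have h₃ := hres 3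
  simp only [reversalY, reversalX, reversalU, Matrix.cons_val] at h₀ h₁ h₂ h₃
  have hb : (b + 1) * (1 + √2) = 0 := by linear_combination h₀ + h₁ - h₂ - h₃
  linarith [(mul_eq_zero.mp hb).resolve_right (by positivity)]

/-- There exist data vectors `y, x, u₁, u₂` in `ℝ⁴` (with `u₁, u₂`
depending on a parameter `ε`) such that all four correlations `r(u_i, x)`, `r(u_i, y)`
tend to `0` as `ε → 0⁺`, the simple least-squares regression coefficient of `y` on `x`
(with intercept) is positive, and yet for all sufficiently small `ε > 0` the
least-squares coefficient of `x` when `y` is regressed onto `{x, u₁, u₂}` (with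
intercept) equals `−1`. -/
theorem stmt19 :
    ∃ (Y X : Fin 4 → ℝ) (U : ℝ → Fin 2 → Fin 4 → ℝ),
      (∀ i : Fin 2,
        Tendsto (fun ε => sampleCorr (U ε i) X) (nhdsWithin 0 (Set.Ioi 0)) (nhds 0)) ∧
      (∀ i : Fin 2,
        Tendsto (fun ε => sampleCorr (U ε i) Y) (nhdsWithin 0 (Set.Ioi 0)) (nhds 0)) ∧
      (∀ b b0 : ℝ,
        (∀ b' b0' : ℝ, ∑ a, (Y a - (b * X a + b0)) ^ 2 ≤ ∑ a, (Y a - (b' * X a + b0')) ^ 2) →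
          0 < b) ∧
      (∃ ε₀ > (0 : ℝ), ∀ ε : ℝ, 0 < ε → ε < ε₀ →
        ∀ b b0 c1 c2 : ℝ,
          (∀ b' b0' c1' c2' : ℝ,
            ∑ a, (Y a - (b * X a + b0 + c1 * U ε 0 a + c2 * U ε 1 a)) ^ 2 ≤
              ∑ a, (Y a - (b' * X a + b0' + c1' * U ε 0 a + c2' * U ε 1 a)) ^ 2) →
          b = -1) :=
  ⟨reversalY, reversalX, reversalU,
    tendsto_sampleCorr_reversalU sum_sq_dev_reversalX_pos rfl,
    tendsto_sampleCorr_reversalU sum_sq_dev_reversalY_pos rfl,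
    fun _ _ => reversal_simple_slope_pos,
    ⟨1, one_pos, fun _ hε _ _ _ _ _ => reversal_multiple_slope_eq_neg_one hε.ne'⟩⟩
end
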